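/- arXiv:1904.13288 — 2 statements merged into one kernel-verified Lean document; each statement's English description precedes it below -/
import Mathlib

section
/- Let (Ω, F, P) be a probability space, let ε ∈ [0,1), let (a_n)_{n∈ℕ} be a sequence of nonnegative real numbers with ∑_n a_n = ∞, and let (A_n)_{n∈ℕ} be events (not necessarily independent) with P(A_n) ≥ 1 − ε for every n. Then P(∑_n 1_{A_n} · a_n = ∞) ≥ 1 − ε. -/
open MeasureTheory ENNReal

open Filter

/-- Berger's Lemma 4.2: if `a_n ≥ 0` with `∑ a_n = ∞` and `(A_n)` are events
(not necessarily independent) with `P(A_n) ≥ 1 - ε` for all `n`, where `0 ≤ ε < 1`,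
then `P(∑ 1_{A_n} a_n = ∞) ≥ 1 - ε`. -/
theorem indicator_series_diverges
    {Ω : Type*} [MeasurableSpace Ω] (P : Measure Ω) [IsProbabilityMeasure P]
    (ε : ℝ) (hε0 : 0 ≤ ε) (hε1 : ε < 1)
    (a : ℕ → ℝ) (ha : ∀ n, 0 ≤ a n)
    (hdiv : ∑' n : ℕ, ENNReal.ofReal (a n) = ∞)
    (A : ℕ → Set Ω) (hA : ∀ n, MeasurableSet (A n))
    (hP : ∀ n, P (A n) ≥ 1 - ENNReal.ofReal ε) :
    P {ω | ∑' n : ℕ, ENNReal.ofReal ((A n).indicator (fun _ => a n) ω) = ∞}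
      ≥ 1 - ENNReal.ofReal ε := by
  have hεle : ENNReal.ofReal ε ≤ 1 := by
    simpa using ENNReal.ofReal_le_ofReal hε1.le
  -- indicator functions in ℝ≥0∞
  set g : ℕ → Ω → ℝ≥0∞ := fun n => (A n).indicator (fun _ => ENNReal.ofReal (a n)) with hg
  have hgeq : ∀ n ω, ENNReal.ofReal ((A n).indicator (fun _ => a n) ω) = g n ω := by
    intro n ω
    by_cases h : ω ∈ A n <;> simp [hg, h]
  set h : ℕ → Ω → ℝ≥0∞ := fun n => (A n)ᶜ.indicator (fun _ => ENNReal.ofReal (a n)) with hh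
  have hgh : ∀ n ω, g n ω + h n ω = ENNReal.ofReal (a n) := by
    intro n ω
    by_cases hm : ω ∈ A n <;> simp [hg, hh, hm]
  set S : Ω → ℝ≥0∞ := fun ω => ∑' n, g n ω with hS
  set s : ℕ → ℝ≥0∞ := fun N => ∑ n ∈ Finset.range N, ENNReal.ofReal (a n) with hs
  have hsne : ∀ N, s N ≠ ⊤ := by
    intro N
    simp only [hs]
    exact (ENNReal.sum_lt_top.2 fun n _ => ofReal_lt_top).ne
  have hstop : Tendsto s atTop (nhds ⊤) := by
    have := ENNReal.tendsto_nat_tsum (fun n => ENNReal.ofReal (a n))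
    rwa [hdiv] at this
  -- the functions for Fatou
  set f : ℕ → Ω → ℝ≥0∞ := fun N ω => (s N)⁻¹ * ∑ n ∈ Finset.range N, h n ω with hf
  have hfmeas : ∀ N, Measurable (f N) := by
    intro N
    refine Measurable.const_mul (Finset.measurable_sum _ fun n _ => ?_) _
    exact measurable_const.indicator (hA n).compl
  -- integral bound
  have hint : ∀ N, ∫⁻ ω, f N ω ∂P ≤ ENNReal.ofReal ε := by
    intro N
    have hTi : ∫⁻ ω, ∑ n ∈ Finset.range N, h n ω ∂P ≤ ENNReal.ofReal ε * s N := by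
      rw [lintegral_finset_sum _ fun n _ => measurable_const.indicator (hA n).compl]
      have : ∀ n, ∫⁻ ω, h n ω ∂P ≤ ENNReal.ofReal (a n) * ENNReal.ofReal ε := by
        intro n
        rw [hh, lintegral_indicator_const (hA n).compl]
        refine mul_le_mul_right ?_ _
        rw [measure_compl (hA n) (measure_ne_top P _), measure_univ]
        calc 1 - P (A n) ≤ 1 - (1 - ENNReal.ofReal ε) := tsub_le_tsub_left (hP n) 1
          _ = ENNReal.ofReal ε := ENNReal.sub_sub_cancel one_ne_top hεle
      calc ∑ n ∈ Finset.range N, ∫⁻ ω, h n ω ∂P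
          ≤ ∑ n ∈ Finset.range N, ENNReal.ofReal (a n) * ENNReal.ofReal ε :=
            Finset.sum_le_sum fun n _ => this n
        _ = ENNReal.ofReal ε * s N := by simp only [hs, ← Finset.sum_mul]; rw [mul_comm]
    calc ∫⁻ ω, f N ω ∂P = (s N)⁻¹ * ∫⁻ ω, ∑ n ∈ Finset.range N, h n ω ∂P := by
          rw [hf]
          exact lintegral_const_mul _ (Finset.measurable_sum _ fun n _ =>
            measurable_const.indicator (hA n).compl)
      _ ≤ (s N)⁻¹ * (ENNReal.ofReal ε * s N) := mul_le_mul_right hTi _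
      _ = ENNReal.ofReal ε * ((s N)⁻¹ * s N) := by ring
      _ ≤ ENNReal.ofReal ε * 1 := by
          refine mul_le_mul_right ?_ _
          rcases eq_or_ne (s N) 0 with h0 | h0
          · simp [h0]
          · rw [ENNReal.inv_mul_cancel h0 (hsne N)]
      _ = ENNReal.ofReal ε := mul_one _
  -- pointwise liminf bound on the set where S is finite
  have hliminf : ∀ ω, S ω ≠ ⊤ → 1 ≤ liminf (fun N => f N ω) atTop := by
    intro ω hω
    have hlow : ∀ᶠ N in atTop, 1 - (s N)⁻¹ * S ω ≤ f N ω := by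
      have hev : ∀ᶠ N in atTop, 1 ≤ s N := hstop.eventually (eventually_ge_nhds one_lt_top)
      filter_upwards [hev] with N hN
      have hsn0 : s N ≠ 0 := by
        intro h0; rw [h0] at hN; exact (not_le.2 zero_lt_one) hN
      -- T N ω ≥ s N - partial sum of g ≥ s N - S ω
      have hT : s N - S ω ≤ ∑ n ∈ Finset.range N, h n ω := by
        have h1 : s N = ∑ n ∈ Finset.range N, g n ω + ∑ n ∈ Finset.range N, h n ω := by
          rw [hs, ← Finset.sum_add_distrib]
          exact (Finset.sum_congr rfl fun n _ => (hgh n ω).symm)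
        have h2 : ∑ n ∈ Finset.range N, g n ω ≤ S ω := ENNReal.sum_le_tsum _
        rw [h1]
        calc ∑ n ∈ Finset.range N, g n ω + ∑ n ∈ Finset.range N, h n ω - S ω
            ≤ S ω + ∑ n ∈ Finset.range N, h n ω - S ω :=
              tsub_le_tsub_right (add_le_add_left h2 _) _
          _ = ∑ n ∈ Finset.range N, h n ω := by
              rw [add_comm, ENNReal.add_sub_cancel_right hω]
      calc 1 - (s N)⁻¹ * S ω = (s N)⁻¹ * s N - (s N)⁻¹ * S ω := by
            rw [ENNReal.inv_mul_cancel hsn0 (hsne N)]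
        _ = (s N)⁻¹ * (s N - S ω) := by
            rw [ENNReal.mul_sub fun _ _ => ENNReal.inv_ne_top.2 hsn0]
        _ ≤ f N ω := mul_le_mul_right hT _
    have htend : Tendsto (fun N => 1 - (s N)⁻¹ * S ω) atTop (nhds 1) := by
      have hinv : Tendsto (fun N => (s N)⁻¹) atTop (nhds 0) := by
        have := ENNReal.tendsto_inv_iff.2 hstop
        simpa using this
      have hmul : Tendsto (fun N => (s N)⁻¹ * S ω) atTop (nhds 0) := by
        have := ENNReal.Tendsto.mul_const hinv (Or.inr hω)
        simpa using this
      have := ENNReal.Tendsto.sub (tendsto_const_nhds : Tendsto (fun _ : ℕ => (1:ℝ≥0∞)) atTop (nhds 1))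
        hmul (Or.inl one_ne_top)
      simpa using this
    calc (1:ℝ≥0∞) = liminf (fun N => 1 - (s N)⁻¹ * S ω) atTop := (htend.liminf_eq).symm
      _ ≤ liminf (fun N => f N ω) atTop := liminf_le_liminf hlow
  -- measurability of S and the target set
  have hSmeas : Measurable S := by
    refine Measurable.ennreal_tsum fun n => measurable_const.indicator (hA n)
  set D : Set Ω := {ω | S ω = ⊤} with hD
  have hDmeas : MeasurableSet D := hSmeas (measurableSet_singleton ⊤)
  -- Fatou
  have hcompl : P Dᶜ ≤ ENNReal.ofReal ε := by
    have h1 : P Dᶜ ≤ ∫⁻ ω, liminf (fun N => f N ω) atTop ∂P := by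
      have : ∀ ω, Dᶜ.indicator (fun _ => (1:ℝ≥0∞)) ω ≤ liminf (fun N => f N ω) atTop := by
        intro ω
        by_cases hω : ω ∈ Dᶜ
        · rw [Set.indicator_of_mem hω]
          exact hliminf ω hω
        · simp [Set.indicator_of_notMem hω]
      calc P Dᶜ = ∫⁻ ω, Dᶜ.indicator (fun _ => (1:ℝ≥0∞)) ω ∂P := by
            rw [lintegral_indicator_const hDmeas.compl, one_mul]
        _ ≤ ∫⁻ ω, liminf (fun N => f N ω) atTop ∂P := lintegral_mono this
    have h2 : ∫⁻ ω, liminf (fun N => f N ω) atTop ∂P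
        ≤ liminf (fun N => ∫⁻ ω, f N ω ∂P) atTop := lintegral_liminf_le hfmeas
    have h3 : liminf (fun N => ∫⁻ ω, f N ω ∂P) atTop ≤ ENNReal.ofReal ε := by
      calc liminf (fun N => ∫⁻ ω, f N ω ∂P) atTop
          ≤ liminf (fun _ : ℕ => ENNReal.ofReal ε) atTop :=
            liminf_le_liminf (Eventually.of_forall hint)
        _ = ENNReal.ofReal ε := liminf_const _
    exact h1.trans (h2.trans h3)
  -- conclude
  have hDset : {ω | ∑' n : ℕ, ENNReal.ofReal ((A n).indicator (fun _ => a n) ω) = ∞} = D := by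
    ext ω
    simp only [hD, Set.mem_setOf_eq, hS]
    constructor <;> intro hx <;>
      [skip; skip] <;>
      · rw [show (fun n => ENNReal.ofReal ((A n).indicator (fun _ => a n) ω)) = fun n => g n ω
          from funext fun n => hgeq n ω] at *
        first | exact hx | exact hx
  rw [hDset]
  have := measure_compl hDmeas.compl (measure_ne_top P _)
  rw [compl_compl, measure_univ] at this
  rw [this]
  exact tsub_le_tsub_left hcompl 1
end

section
/- Let α ≥ 4 and let g : ℝ² → [0,1] be a measurable function satisfying sup_{x ∈ ℝ²} g(x)/|x|^{−α} < ∞, where |·| denotes the 1-norm on ℝ². Let B = [a₁,b₁] × [a₂,b₂] ⊂ ℝ² be a bounded box (a₁ < b₁, a₂ < b₂). Then ∫_B ∫_{ℝ² \ B} g(x − y) dx dy < ∞. -/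
/-!
Since `α > 2`, the bounds `g ≤ 1` near the origin and `g x ≤ M ‖x‖^(-α)` away from it make `g`
integrable over the whole plane. By translation invariance every inner integral is therefore at
most `∫ g`, and the outer integral runs over a set of finite measure.
-/

open MeasureTheory ENNReal Set

namespace Real

lemma one_le_two_rpow_mul_one_add_rpow_neg {t α : ℝ} (ht₀ : 0 ≤ t) (ht₁ : t ≤ 1) (hα : 0 ≤ α) :
    1 ≤ 2 ^ α * (1 + t) ^ (-α) := by
  rw [rpow_neg (by linarith), ← div_eq_mul_inv, ← div_rpow (by norm_num) (by linarith)]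
  exact one_le_rpow ((one_le_div (by linarith)).2 (by linarith)) hα

lemma rpow_neg_le_two_rpow_mul_one_add_rpow_neg {t α : ℝ} (ht : 1 ≤ t) (hα : 0 ≤ α) :
    t ^ (-α) ≤ 2 ^ α * (1 + t) ^ (-α) := by
  have h2t : (2 * t) ^ (-α) ≤ (1 + t) ^ (-α) :=
    rpow_le_rpow_of_nonpos (by linarith) (by linarith) (by linarith)
  calc t ^ (-α) = 2 ^ α * (2 * t) ^ (-α) := by
        rw [mul_rpow (by norm_num) (by linarith), ← mul_assoc, ← rpow_add (by norm_num),
          add_neg_cancel, rpow_zero, one_mul]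
    _ ≤ 2 ^ α * (1 + t) ^ (-α) := by gcongr

end Real

lemma Prod.norm_le_abs_fst_add_abs_snd (x : ℝ × ℝ) : ‖x‖ ≤ |x.1| + |x.2| :=
  max_le (le_add_of_nonneg_right (abs_nonneg _)) (le_add_of_nonneg_left (abs_nonneg _))

lemma le_mul_one_add_norm_rpow_neg {E : Type*} [NormedAddCommGroup E] {g : E → ℝ} {α M : ℝ}
    (hα : 0 ≤ α) (hg₁ : ∀ x, g x ≤ 1)
    (hgM : ∀ x, x ≠ 0 → g x ≤ M * ‖x‖ ^ (-α)) (x : E) :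
    g x ≤ max 1 M * 2 ^ α * (1 + ‖x‖) ^ (-α) := by
  rw [mul_assoc]
  have hK : 0 ≤ 2 ^ α * (1 + ‖x‖) ^ (-α) := by positivity
  rcases le_or_gt ‖x‖ 1 with hx | hx
  · calc g x ≤ 1 := hg₁ x
      _ ≤ 2 ^ α * (1 + ‖x‖) ^ (-α) :=
        Real.one_le_two_rpow_mul_one_add_rpow_neg (norm_nonneg x) hx hα
      _ ≤ max 1 M * (2 ^ α * (1 + ‖x‖) ^ (-α)) := le_mul_of_one_le_left hK (le_max_left _ _)
  · have hx₀ : x ≠ 0 := norm_pos_iff.1 (by linarith)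
    calc g x ≤ M * ‖x‖ ^ (-α) := hgM x hx₀
      _ ≤ max 1 M * ‖x‖ ^ (-α) := by gcongr; exact le_max_right _ _
      _ ≤ max 1 M * (2 ^ α * (1 + ‖x‖) ^ (-α)) := by
        gcongr
        exact Real.rpow_neg_le_two_rpow_mul_one_add_rpow_neg hx.le hα

lemma lintegral_ofReal_lt_top_of_le_norm_rpow_neg {E : Type*} [NormedAddCommGroup E]
    [NormedSpace ℝ E] [FiniteDimensional ℝ E] [MeasurableSpace E] [BorelSpace E]
    (μ : Measure E) [μ.IsAddHaarMeasure] {g : E → ℝ} {α M : ℝ}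
    (hα : Module.finrank ℝ E < α) (hg₁ : ∀ x, g x ≤ 1)
    (hgM : ∀ x, x ≠ 0 → g x ≤ M * ‖x‖ ^ (-α)) :
    ∫⁻ x, ENNReal.ofReal (g x) ∂μ < ⊤ := by
  have hα₀ : 0 ≤ α := (Nat.cast_nonneg _).trans hα.le
  calc ∫⁻ x, ENNReal.ofReal (g x) ∂μ
      ≤ ∫⁻ x, ENNReal.ofReal (max 1 M * 2 ^ α) * ENNReal.ofReal ((1 + ‖x‖) ^ (-α)) ∂μ := by
        refine lintegral_mono fun x => ?_
        rw [← ENNReal.ofReal_mul (by positivity)]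
        exact ENNReal.ofReal_le_ofReal (le_mul_one_add_norm_rpow_neg hα₀ hg₁ hgM x)
    _ = ENNReal.ofReal (max 1 M * 2 ^ α) * ∫⁻ x, ENNReal.ofReal ((1 + ‖x‖) ^ (-α)) ∂μ :=
        lintegral_const_mul _ (by fun_prop)
    _ < ⊤ := ENNReal.mul_lt_top ENNReal.ofReal_lt_top (finite_integral_one_add_norm hα)

lemma setLIntegral_setLIntegral_sub_le {G : Type*} [MeasurableSpace G] [AddGroup G]
    [MeasurableAdd G] (μ : Measure G) [μ.IsAddRightInvariant] (f : G → ℝ≥0∞) (s t : Set G) :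
    ∫⁻ y in s, ∫⁻ x in t, f (x - y) ∂μ ∂μ ≤ (∫⁻ x, f x ∂μ) * μ s := by
  calc ∫⁻ y in s, ∫⁻ x in t, f (x - y) ∂μ ∂μ ≤ ∫⁻ _ in s, ∫⁻ x, f x ∂μ ∂μ := by
        refine lintegral_mono fun y => ?_
        rw [← lintegral_sub_right_eq_self f y]
        exact setLIntegral_le_lintegral _ _
    _ = (∫⁻ x, f x ∂μ) * μ s := setLIntegral_const _ _

theorem finite_box_integral_general
    (α : ℝ) (hα : 4 ≤ α)
    (g : ℝ × ℝ → ℝ) (hg1 : ∀ x, g x ≤ 1)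
    (hbound : ∃ M : ℝ, ∀ x : ℝ × ℝ, x ≠ 0 → g x ≤ M * (|x.1| + |x.2|) ^ (-α))
    (a₁ b₁ a₂ b₂ : ℝ) :
    ∫⁻ y in (Icc a₁ b₁ ×ˢ Icc a₂ b₂),
      ∫⁻ x in (Icc a₁ b₁ ×ˢ Icc a₂ b₂)ᶜ, ENNReal.ofReal (g (x - y)) < ⊤ := by
  obtain ⟨M, hM⟩ := hbound
  have hg_norm : ∀ x : ℝ × ℝ, x ≠ 0 → g x ≤ max M 0 * ‖x‖ ^ (-α) := fun x hx =>
    calc g x ≤ M * (|x.1| + |x.2|) ^ (-α) := hM x hx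
      _ ≤ max M 0 * (|x.1| + |x.2|) ^ (-α) := by gcongr; exact le_max_left _ _
      _ ≤ max M 0 * ‖x‖ ^ (-α) := mul_le_mul_of_nonneg_left
          (Real.rpow_le_rpow_of_nonpos (norm_pos_iff.2 hx) (Prod.norm_le_abs_fst_add_abs_snd x)
            (by linarith)) (le_max_right _ _)
  have hdim : (Module.finrank ℝ (ℝ × ℝ) : ℝ) < α := by
    rw [Module.finrank_prod, Module.finrank_self]; norm_num; linarith
  refine (setLIntegral_setLIntegral_sub_le volume (fun x => ENNReal.ofReal (g x)) _ _).trans_lt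
    (ENNReal.mul_lt_top ?_ ?_)
  · exact lintegral_ofReal_lt_top_of_le_norm_rpow_neg volume hdim hg1 hg_norm
  · exact (isCompact_Icc.prod isCompact_Icc).measure_lt_top

/-- If `α ≥ 4` and `g : ℝ² → [0,1]` is measurable with `g(x) ≤ M |x|^{-α}` for `x ≠ 0`
(1-norm), then for any bounded box `B = [a₁,b₁] × [a₂,b₂]` we have
`∫_B ∫_{ℝ²∖B} g(x - y) dx dy < ∞`. -/
theorem finite_box_integral
    (α : ℝ) (hα : 4 ≤ α)
    (g : ℝ × ℝ → ℝ) (hgm : Measurable g)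
    (hg0 : ∀ x, 0 ≤ g x) (hg1 : ∀ x, g x ≤ 1)
    (hbound : ∃ M : ℝ, ∀ x : ℝ × ℝ, x ≠ 0 → g x ≤ M * (|x.1| + |x.2|) ^ (-α))
    (a₁ b₁ a₂ b₂ : ℝ) (h₁ : a₁ < b₁) (h₂ : a₂ < b₂) :
    ∫⁻ y in (Icc a₁ b₁ ×ˢ Icc a₂ b₂),
      ∫⁻ x in (Icc a₁ b₁ ×ˢ Icc a₂ b₂)ᶜ, ENNReal.ofReal (g (x - y)) < ⊤ :=
  finite_box_integral_general α hα g hg1 hbound a₁ b₁ a₂ b₂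
end
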